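/- Simultaneous elliptic shift of both elliptic variables: for every ℓ_d ∈ Λ_d one has Φ_{μ,ν}(τ, u+ℓ_d τ, v+ℓ_d τ, {d_r}) = e^{−πiτ Q(ℓ_d)} · e^{−2πi B(v,ℓ_d)} · Φ_{μ,ν}(τ, u, v, {d_r}). -/

import Mathlib

open scoped BigOperators Real
open Complex

/-- The complex bilinear form `B(x,y) = xᵀ 𝐀 y` attached to an integer matrix `𝐀`,
extended bilinearly to `ℂ^N`. -/
noncomputable def bilC {N : ℕ} (A : Matrix (Fin N) (Fin N) ℤ) (x y : Fin N → ℂ) : ℂ :=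
  ∑ i, ∑ j, x i * (A i j : ℂ) * y j

/-- The real bilinear form `B(x,y) = xᵀ 𝐀 y`. -/
noncomputable def bilR {N : ℕ} (A : Matrix (Fin N) (Fin N) ℤ) (x y : Fin N → ℝ) : ℝ :=
  ∑ i, ∑ j, x i * (A i j : ℝ) * y j

/-- The generalized Appell function `Φ_{μ,ν}(τ,u,v,{d_r})`:
`e^{2πi B(ν,u)} · Σ_{k ∈ ℤ^N} e^{πiτ Q(k+μ−ν) + 2πiτ B(ν,k+μ−ν) + 2πi B(v,k+μ−ν)}
  / ∏_{r=1}^M (1 − e^{2πi B(d_r,u)} e^{2πiτ B(d_r,k+μ−ν)})`. -/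
noncomputable def appellPhi {N M : ℕ} (A : Matrix (Fin N) (Fin N) ℤ)
    (d : Fin M → Fin N → ℤ) (τ : ℂ) (u v : Fin N → ℂ) (μ ν : Fin N → ℝ) : ℂ :=
  Complex.exp (2 * (π : ℂ) * I * bilC A (fun i => (ν i : ℂ)) u) *
  ∑' k : Fin N → ℤ,
    Complex.exp ((π : ℂ) * I * τ *
        bilC A (fun i => (k i : ℂ) + (μ i : ℂ) - (ν i : ℂ))
               (fun i => (k i : ℂ) + (μ i : ℂ) - (ν i : ℂ))
      + 2 * (π : ℂ) * I * τ *
        bilC A (fun i => (ν i : ℂ)) (fun i => (k i : ℂ) + (μ i : ℂ) - (ν i : ℂ))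
      + 2 * (π : ℂ) * I *
        bilC A v (fun i => (k i : ℂ) + (μ i : ℂ) - (ν i : ℂ))) /
    ∏ r, (1 - Complex.exp (2 * (π : ℂ) * I * bilC A (fun i => (d r i : ℂ)) u) *
      Complex.exp (2 * (π : ℂ) * I * τ *
        bilC A (fun i => (d r i : ℂ)) (fun i => (k i : ℂ) + (μ i : ℂ) - (ν i : ℂ))))

/-! Shifting both elliptic variables by `ℓ τ` multiplies the `k`-th summand by a theta-type
factor times the summand at `k + ℓ`: the denominators match exactly because
`B(d_r, u + ℓτ) + τ B(d_r, x) = B(d_r, u) + τ B(d_r, x + ℓ)`, and completing the square in the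
numerator produces `e^{-πiτQ(ℓ)} e^{-2πiB(v,ℓ)} e^{-2πiτB(ν,ℓ)}`. For integral `ℓ` the shift
`k ↦ k + ℓ` permutes `ℤ^N`, so the series is unchanged, and the last factor cancels against the
prefactor `e^{2πiB(ν,u)}`. -/

section Bilinear

variable {N : ℕ} (A : Matrix (Fin N) (Fin N) ℤ)

lemma bilC_add_left (x y z : Fin N → ℂ) :
    bilC A (fun i => x i + y i) z = bilC A x z + bilC A y z := by
  simp only [bilC, add_mul, Finset.sum_add_distrib]

lemma bilC_add_right (x y z : Fin N → ℂ) :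
    bilC A x (fun i => y i + z i) = bilC A x y + bilC A x z := by
  simp only [bilC, mul_add, Finset.sum_add_distrib]

lemma bilC_mul_left (c : ℂ) (x y : Fin N → ℂ) :
    bilC A (fun i => x i * c) y = bilC A x y * c := by
  simp only [bilC, Finset.sum_mul]
  exact Finset.sum_congr rfl fun _ _ => Finset.sum_congr rfl fun _ _ => by ring

lemma bilC_mul_right (c : ℂ) (x y : Fin N → ℂ) :
    bilC A x (fun i => y i * c) = bilC A x y * c := by
  simp only [bilC, Finset.sum_mul]
  exact Finset.sum_congr rfl fun _ _ => Finset.sum_congr rfl fun _ _ => by ring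

lemma bilC_comm (hA : A.IsSymm) (x y : Fin N → ℂ) : bilC A x y = bilC A y x := by
  rw [bilC, Finset.sum_comm]
  refine Finset.sum_congr rfl fun j _ => Finset.sum_congr rfl fun i _ => ?_
  rw [hA.apply i j]
  ring

end Bilinear

section Summand

variable {N M : ℕ} (A : Matrix (Fin N) (Fin N) ℤ) (d : Fin M → Fin N → ℤ) (τ : ℂ)

/-- The summand of `appellPhi` as a function of the lattice point `x = k + μ - ν`. -/
noncomputable def appellSummand (u v ν x : Fin N → ℂ) : ℂ :=
  Complex.exp ((π : ℂ) * I * τ * bilC A x x + 2 * (π : ℂ) * I * τ * bilC A ν x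
      + 2 * (π : ℂ) * I * bilC A v x) /
    ∏ r, (1 - Complex.exp (2 * (π : ℂ) * I * bilC A (fun i => (d r i : ℂ)) u) *
      Complex.exp (2 * (π : ℂ) * I * τ * bilC A (fun i => (d r i : ℂ)) x))

lemma appellPhi_eq_tsum_appellSummand (u v : Fin N → ℂ) (μ ν : Fin N → ℝ) :
    appellPhi A d τ u v μ ν =
      Complex.exp (2 * (π : ℂ) * I * bilC A (fun i => (ν i : ℂ)) u) *
        ∑' k : Fin N → ℤ, appellSummand A d τ u v (fun i => (ν i : ℂ))
          (fun i => (k i : ℂ) + (μ i : ℂ) - (ν i : ℂ)) :=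
  rfl

lemma appellSummand_shift (hA : A.IsSymm) (u v ν x ℓ : Fin N → ℂ) :
    appellSummand A d τ (fun i => u i + ℓ i * τ) (fun i => v i + ℓ i * τ) ν x =
      Complex.exp (-((π : ℂ) * I * τ * bilC A ℓ ℓ) - 2 * (π : ℂ) * I * bilC A v ℓ
          - 2 * (π : ℂ) * I * τ * bilC A ν ℓ) *
        appellSummand A d τ u v ν (fun i => x i + ℓ i) := by
  simp only [appellSummand, bilC_add_left, bilC_add_right, bilC_mul_left, bilC_mul_right,
    bilC_comm A hA x ℓ]
  rw [← mul_div_assoc, ← Complex.exp_add]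
  congr 1
  · congr 1
    ring
  · refine Finset.prod_congr rfl fun r _ => ?_
    rw [← Complex.exp_add, ← Complex.exp_add]
    congr 2
    ring

end Summand

theorem appellPhi_elliptic_shift_general
    {N M : ℕ}
    (A : Matrix (Fin N) (Fin N) ℤ) (hAsymm : A.IsSymm)
    (d : Fin M → Fin N → ℤ)
    (τ : ℂ) (u v : Fin N → ℂ)
    (μ ν : Fin N → ℝ)
    (ℓd : Fin N → ℤ) :
    appellPhi A d τ (fun i => u i + (ℓd i : ℂ) * τ) (fun i => v i + (ℓd i : ℂ) * τ) μ ν =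
      Complex.exp (-((π : ℂ) * I * τ *
        bilC A (fun i => (ℓd i : ℂ)) (fun i => (ℓd i : ℂ)))) *
      Complex.exp (-(2 * (π : ℂ) * I * bilC A v (fun i => (ℓd i : ℂ)))) *
      appellPhi A d τ u v μ ν := by
  have hreindex (f : (Fin N → ℂ) → ℂ) :
      ∑' k : Fin N → ℤ, f (fun i => (k i : ℂ) + μ i - ν i + ℓd i)
        = ∑' k : Fin N → ℤ, f (fun i => (k i : ℂ) + μ i - ν i) := by
    refine .trans ?_ ((Equiv.addRight ℓd).tsum_eq fun k => f fun i => (k i : ℂ) + μ i - ν i)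
    refine tsum_congr fun k => congrArg f (funext fun i => ?_)
    push_cast [Equiv.coe_addRight, Pi.add_apply]
    ring
  rw [appellPhi_eq_tsum_appellSummand, appellPhi_eq_tsum_appellSummand,
    tsum_congr fun k => appellSummand_shift A d τ hAsymm u v _ _ _, tsum_mul_left, hreindex,
    bilC_add_right, bilC_mul_right]
  simp only [← mul_assoc, ← Complex.exp_add]
  congr 2
  ring

/-- Simultaneous elliptic shift of both elliptic variables: for every `ℓ_d ∈ Λ_d`,
`Φ_{μ,ν}(τ, u+ℓ_d τ, v+ℓ_d τ, {d_r})
  = e^{−πiτ Q(ℓ_d)} · e^{−2πi B(v,ℓ_d)} · Φ_{μ,ν}(τ, u, v, {d_r})`. -/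
theorem appellPhi_elliptic_shift
    {N M : ℕ} (hN : 1 ≤ N) (hM : 1 ≤ M) (hMN : M ≤ N)
    (A : Matrix (Fin N) (Fin N) ℤ) (hAsymm : A.IsSymm)
    (hApos : (A.map ((↑) : ℤ → ℝ)).PosDef)
    (d : Fin M → Fin N → ℤ)
    (hd : LinearIndependent ℝ (fun r => fun i => (d r i : ℝ)))
    (τ : ℂ) (hτ : 0 < τ.im) (u v : Fin N → ℂ)
    (μ ν : Fin N → ℝ)
    (hν : ν ∈ Submodule.span ℝ (Set.range (fun r => fun i => (d r i : ℝ))))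
    (ℓd : Fin N → ℤ) (hℓd : ℓd ∈ Submodule.span ℤ (Set.range d)) :
    appellPhi A d τ (fun i => u i + (ℓd i : ℂ) * τ) (fun i => v i + (ℓd i : ℂ) * τ) μ ν =
      Complex.exp (-((π : ℂ) * I * τ *
        bilC A (fun i => (ℓd i : ℂ)) (fun i => (ℓd i : ℂ)))) *
      Complex.exp (-(2 * (π : ℂ) * I * bilC A v (fun i => (ℓd i : ℂ)))) *
      appellPhi A d τ u v μ ν :=
  appellPhi_elliptic_shift_general A hAsymm d τ u v μ ν ℓd
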